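/- Let (X, f, x) be a 3-valued one-step model for Elgesem's logic satisfying (E1')–(E3b'), with valuation τ : V → Set X, V finite, and let ψ be a finite conjunction of literals over atoms Ea, Ca (a ∈ V), satisfied by f under τ (where f ⊨ Ea iff f(τ(a)) = ⊤ and f ⊨ Ca iff f(τ(a)) ≠ ⊥). Then there exists Y ⊆ X containing x, of cardinality at most 1 + |V|² + |V| + 1, and g : Set Y → 3 satisfying (E1')–(E3b') with point x, such that g(τ(a) ∩ Y) = f(τ(a)) for all a ∈ V; in particular g satisfies ψ under the valuation τ_Y(a) = τ(a) ∩ Y, and x ∈ τ_Y(a) iff x ∈ τ(a). -/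
import Mathlib


/- `3 = {⊥ < * < ⊤}` is represented by `Fin 3` with `⊥ = 0`, `* = 1`, `⊤ = 2`. -/

/-- Restriction of a subset of `X` to a subset `Y ⊆ X` (as a subtype). -/
def restr {X : Type} (Y : Set X) (A : Set X) : Set Y := {y : Y | (y : X) ∈ A}

/-- A literal `(sign, isE, a)` over the atoms `Ea` (`isE = true`) and
`Ca` (`isE = false`): `f ⊨ Ea` iff `f (τ a) = ⊤`, `f ⊨ Ca` iff `f (τ a) ≠ ⊥`;
`sign = false` negates the atom. -/
def elgLitSat {X V : Type} (f : Set X → Fin 3) (τ : V → Set X)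
    (l : Bool × Bool × V) : Prop :=
  if l.1 then (if l.2.1 then f (τ l.2.2) = 2 else f (τ l.2.2) ≠ 0)
  else ¬ (if l.2.1 then f (τ l.2.2) = 2 else f (τ l.2.2) ≠ 0)

private lemma finset_biInter_union {α β : Type*} [DecidableEq α] (S T : Finset α)
    (t : α → Set β) :
    (⋂ b ∈ (S ∪ T), t b) = (⋂ b ∈ S, t b) ∩ (⋂ b ∈ T, t b) := by
  ext p
  simp [Finset.mem_union, or_imp, forall_and]

private lemma range_ncard_le {ι α : Type*} [Fintype ι] (g : ι → α) :
    (Set.range g).ncard ≤ Fintype.card ι := by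
  classical
  have h : Set.range g = ↑(Finset.univ.image g) := by simp
  rw [h, Set.ncard_coe_finset]
  exact (Finset.card_image_le).trans (le_of_eq Finset.card_univ)

theorem stmt17 {X V : Type} [Fintype V] (f : Set X → Fin 3) (x : X)
    (hE1 : f Set.univ = 0)
    (hE2 : ∀ A B : Set X, min (f A) (f B) ≤ f (A ∩ B))
    (hE3a : f ∅ = 0)
    (hE3b : ∀ A : Set X, f A = 2 → x ∈ A)
    (τ : V → Set X) (ψ : List (Bool × Bool × V))
    (hsat : ∀ l ∈ ψ, elgLitSat f τ l) :
    ∃ (Y : Set X) (hxY : x ∈ Y), Y.Finite ∧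
      Y.ncard ≤ 1 + Fintype.card V ^ 2 + Fintype.card V + 1 ∧
      ∃ g : Set Y → Fin 3,
        g Set.univ = 0 ∧
        (∀ A B : Set Y, min (g A) (g B) ≤ g (A ∩ B)) ∧
        g ∅ = 0 ∧
        (∀ A : Set Y, g A = 2 → (⟨x, hxY⟩ : Y) ∈ A) ∧
        (∀ a : V, g (restr Y (τ a)) = f (τ a)) ∧
        (∀ l ∈ ψ, elgLitSat g (fun a => restr Y (τ a)) l) ∧
        (∀ a : V, x ∈ τ a ∩ Y ↔ x ∈ τ a) := by
  classical
  -- lower bound on f of finite intersections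
  have hInf : ∀ S : Finset V, S.Nonempty →
      S.inf (fun b => f (τ b)) ≤ f (⋂ b ∈ S, τ b) := by
    intro S hS
    induction hS using Finset.Nonempty.cons_induction with
    | singleton a => simp [Finset.set_biInter_singleton]
    | cons a S h hS IH =>
        rw [Finset.cons_eq_insert, Finset.inf_insert, Finset.set_biInter_insert]
        calc f (τ a) ⊓ S.inf (fun b => f (τ b))
            ≤ min (f (τ a)) (f (⋂ b ∈ S, τ b)) := inf_le_inf_left _ IH
          _ ≤ f (τ a ∩ ⋂ b ∈ S, τ b) := hE2 _ _
  -- witnesses y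
  have hy' : ∀ a b : V, ∃ p : X, ¬ τ a ⊆ τ b → p ∈ τ a ∧ p ∉ τ b := by
    intro a b
    by_cases h : τ a ⊆ τ b
    · exact ⟨x, fun h' => absurd h h'⟩
    · obtain ⟨p, hp1, hp2⟩ := Set.not_subset.mp h
      exact ⟨p, fun _ => ⟨hp1, hp2⟩⟩
  choose y hy using hy'
  -- witnesses z
  have hz' : ∀ a : V, ∃ p : X, τ a ≠ Set.univ →
      p ∉ τ a ∧ ∀ b : V, τ a ⊆ τ b → f (τ a) < f (τ b) → p ∈ τ b := by
    intro a
    by_cases ha : τ a = Set.univ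
    · exact ⟨x, fun h => absurd ha h⟩
    · set F := Finset.univ.filter (fun b => τ a ⊆ τ b ∧ f (τ a) < f (τ b)) with hF
      have hFmem : ∀ b : V, b ∈ F ↔ τ a ⊆ τ b ∧ f (τ a) < f (τ b) := by
        intro b; simp [hF]
      by_cases hFn : F.Nonempty
      · obtain ⟨b₀, hb₀⟩ := hFn
        have hb₀' := (hFmem b₀).mp hb₀
        have htop : f (τ a) < ⊤ :=
          lt_of_lt_of_le hb₀'.2 le_top
        have h1 : f (τ a) < F.inf (fun b => f (τ b)) := by
          rw [Finset.lt_inf_iff htop]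
          intro b hb; exact ((hFmem b).mp hb).2
        have h2 : f (τ a) < f (⋂ b ∈ F, τ b) :=
          lt_of_lt_of_le h1 (hInf F ⟨b₀, hb₀⟩)
        have h3 : ¬ (⋂ b ∈ F, τ b) ⊆ τ a := by
          intro hsub
          have hsup : τ a ⊆ ⋂ b ∈ F, τ b := by
            intro p hp
            exact Set.mem_iInter₂.mpr (fun b hb => ((hFmem b).mp hb).1 hp)
          have : (⋂ b ∈ F, τ b) = τ a := Set.Subset.antisymm hsub hsup
          rw [this] at h2; exact lt_irrefl _ h2
        obtain ⟨p, hp1, hp2⟩ := Set.not_subset.mp h3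
        refine ⟨p, fun _ => ⟨hp2, fun b h4 h5 => ?_⟩⟩
        exact Set.mem_iInter₂.mp hp1 b ((hFmem b).mpr ⟨h4, h5⟩)
      · obtain ⟨p, hp⟩ := Set.not_subset.mp (fun h => ha (Set.univ_subset_iff.mp h))
        refine ⟨p, fun _ => ⟨hp.2, fun b h4 h5 => ?_⟩⟩
        exact absurd ⟨b, (hFmem b).mpr ⟨h4, h5⟩⟩ hFn
  choose z hz using hz'
  -- witness w
  have hw' : ∃ p : X, ∀ b : V, 0 < f (τ b) → p ∈ τ b := by
    set W := Finset.univ.filter (fun b => 0 < f (τ b)) with hW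
    have hWmem : ∀ b : V, b ∈ W ↔ 0 < f (τ b) := by intro b; simp [hW]
    by_cases hWn : W.Nonempty
    · have htop : (0 : Fin 3) < ⊤ := by decide
      have h1 : (0 : Fin 3) < W.inf (fun b => f (τ b)) := by
        rw [Finset.lt_inf_iff htop]
        intro b hb; exact (hWmem b).mp hb
      have h2 : (0 : Fin 3) < f (⋂ b ∈ W, τ b) := lt_of_lt_of_le h1 (hInf W hWn)
      have h3 : (⋂ b ∈ W, τ b) ≠ ∅ := by
        intro h; rw [h, hE3a] at h2; exact lt_irrefl _ h2
      obtain ⟨p, hp⟩ := Set.nonempty_iff_ne_empty.mpr h3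
      exact ⟨p, fun b hb => Set.mem_iInter₂.mp hp b ((hWmem b).mpr hb)⟩
    · exact ⟨x, fun b hb => absurd ⟨b, (hWmem b).mpr hb⟩ hWn⟩
  obtain ⟨w, hw⟩ := hw'
  -- the set Y
  set Y : Set X := insert x (insert w
      (Set.range (fun p : V × V => y p.1 p.2) ∪ Set.range z)) with hY
  have hxY : x ∈ Y := Set.mem_insert _ _
  have hwY : w ∈ Y := Set.mem_insert_of_mem _ (Set.mem_insert _ _)
  have hyY : ∀ a b : V, y a b ∈ Y := fun a b =>
    Set.mem_insert_of_mem _ (Set.mem_insert_of_mem _ (Or.inl ⟨(a, b), rfl⟩))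
  have hzY : ∀ a : V, z a ∈ Y := fun a =>
    Set.mem_insert_of_mem _ (Set.mem_insert_of_mem _ (Or.inr ⟨a, rfl⟩))
  have hfin : Y.Finite := by
    apply Set.Finite.insert
    apply Set.Finite.insert
    exact (Set.finite_range _).union (Set.finite_range _)
  refine ⟨Y, hxY, hfin, ?_, ?_⟩
  · -- cardinality
    have h1 : Y.ncard ≤ (insert w
        (Set.range (fun p : V × V => y p.1 p.2) ∪ Set.range z)).ncard + 1 :=
      Set.ncard_insert_le _ _
    have h2 : (insert w (Set.range (fun p : V × V => y p.1 p.2) ∪ Set.range z)).ncard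
        ≤ (Set.range (fun p : V × V => y p.1 p.2) ∪ Set.range z).ncard + 1 :=
      Set.ncard_insert_le _ _
    have h3 : (Set.range (fun p : V × V => y p.1 p.2) ∪ Set.range z).ncard
        ≤ (Set.range (fun p : V × V => y p.1 p.2)).ncard + (Set.range z).ncard :=
      Set.ncard_union_le _ _
    have h4 : (Set.range (fun p : V × V => y p.1 p.2)).ncard ≤ Fintype.card V ^ 2 := by
      have := range_ncard_le (fun p : V × V => y p.1 p.2)
      rwa [Fintype.card_prod, ← sq] at this
    have h5 : (Set.range z).ncard ≤ Fintype.card V := range_ncard_le z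
    omega
  -- the function g
  set val : Finset V → Fin 3 := fun S => S.inf (fun b => f (τ b)) with hval
  set cand : Set Y → Finset (Finset V) := fun B =>
    Finset.univ.filter (fun S : Finset V =>
      S.Nonempty ∧ restr Y (⋂ b ∈ S, τ b) = B) with hcand
  have hcmem : ∀ B (S : Finset V), S ∈ cand B ↔
      S.Nonempty ∧ restr Y (⋂ b ∈ S, τ b) = B := by
    intro B S; simp [hcand]
  set g : Set Y → Fin 3 := fun B => (cand B).sup val with hg
  -- facts about restr
  have hrestr_inter : ∀ A B : Set X, restr Y (A ∩ B) = restr Y A ∩ restr Y B := by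
    intro A B; rfl
  -- the key value lemma: any candidate for the trace of τ a has value ≤ f (τ a)
  have hkey : ∀ (S : Finset V), S.Nonempty → ∀ a : V,
      restr Y (⋂ b ∈ S, τ b) = restr Y (τ a) → val S ≤ f (τ a) := by
    intro S hS a hSa
    by_contra hlt
    push_neg at hlt
    have hall : ∀ b ∈ S, f (τ a) < f (τ b) := fun b hb =>
      lt_of_lt_of_le hlt (Finset.inf_le hb)
    have hsub : ∀ b ∈ S, τ a ⊆ τ b := by
      intro b hb
      by_contra hnsub
      have hy1 := hy a b hnsub
      have hmem : (⟨y a b, hyY a b⟩ : Y) ∈ restr Y (τ a) := hy1.1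
      rw [← hSa] at hmem
      have : y a b ∈ ⋂ b' ∈ S, τ b' := hmem
      exact hy1.2 (Set.mem_iInter₂.mp this b hb)
    by_cases ha : τ a = Set.univ
    · obtain ⟨b₀, hb₀⟩ := hS
      have : τ b₀ = Set.univ := Set.univ_subset_iff.mp (ha ▸ hsub b₀ hb₀)
      have h1 := hall b₀ hb₀
      rw [ha, hE1, this, hE1] at h1
      exact lt_irrefl _ h1
    · obtain ⟨hz1, hz2⟩ := hz a ha
      have hmem : z a ∈ ⋂ b ∈ S, τ b :=
        Set.mem_iInter₂.mpr (fun b hb => hz2 b (hsub b hb) (hall b hb))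
      have hmem2 : (⟨z a, hzY a⟩ : Y) ∈ restr Y (⋂ b ∈ S, τ b) := hmem
      rw [hSa] at hmem2
      exact hz1 hmem2
  -- candidates for univ have value 0
  have huniv : ∀ (S : Finset V), S.Nonempty →
      restr Y (⋂ b ∈ S, τ b) = (Set.univ : Set Y) → val S = 0 := by
    intro S hS hSu
    by_contra hne
    obtain ⟨b₀, hb₀⟩ := hS
    have hall : ∀ b ∈ S, f (τ b) ≠ 0 := by
      intro b hb h0
      exact hne (Fin.le_zero_iff.mp (h0 ▸ Finset.inf_le hb))
    have hb0pos := hall b₀ hb₀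
    have hbne : τ b₀ ≠ Set.univ := fun h => hb0pos (h ▸ hE1)
    obtain ⟨hz1, _⟩ := hz b₀ hbne
    have hmem : (⟨z b₀, hzY b₀⟩ : Y) ∈ restr Y (⋂ b ∈ S, τ b) := by
      rw [hSu]; trivial
    have : z b₀ ∈ ⋂ b ∈ S, τ b := hmem
    exact hz1 (Set.mem_iInter₂.mp this b₀ hb₀)
  -- candidates for ∅ have value 0
  have hempty : ∀ (S : Finset V), S.Nonempty →
      restr Y (⋂ b ∈ S, τ b) = (∅ : Set Y) → val S = 0 := by
    intro S hS hSe
    by_contra hne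
    have hall : ∀ b ∈ S, 0 < f (τ b) := by
      intro b hb
      rcases Fin.pos_iff_ne_zero.mpr (fun h0 =>
        hne (Fin.le_zero_iff.mp (h0 ▸ Finset.inf_le hb))) with h
      exact h
    have hmem : w ∈ ⋂ b ∈ S, τ b :=
      Set.mem_iInter₂.mpr (fun b hb => hw b (hall b hb))
    have hmem2 : (⟨w, hwY⟩ : Y) ∈ restr Y (⋂ b ∈ S, τ b) := hmem
    rw [hSe] at hmem2
    exact hmem2
  -- sups attained / emptiness
  have hg_ne : ∀ B : Set Y, g B ≠ 0 → ∃ S ∈ cand B, g B = val S := by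
    intro B hB
    have hne : (cand B).Nonempty := by
      rcases Finset.eq_empty_or_nonempty (cand B) with h | h
      · exfalso; apply hB; rw [hg]; simp only [h, Finset.sup_empty]; rfl
      · exact h
    exact Finset.exists_mem_eq_sup _ hne _
  -- the trace values
  have hgτ : ∀ a : V, g (restr Y (τ a)) = f (τ a) := by
    intro a
    apply le_antisymm
    · apply Finset.sup_le
      intro S hS
      obtain ⟨h1, h2⟩ := (hcmem _ S).mp hS
      exact hkey S h1 a h2
    · have hmem : ({a} : Finset V) ∈ cand (restr Y (τ a)) := by
        rw [hcmem]
        exact ⟨Finset.singleton_nonempty a, by rw [Finset.set_biInter_singleton]⟩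
      have := Finset.le_sup (f := val) hmem
      simpa [hval] using this
  refine ⟨g, ?_, ?_, ?_, ?_, hgτ, ?_, ?_⟩
  · -- g univ = 0
    rw [← Fin.le_zero_iff]
    apply Finset.sup_le
    intro S hS
    obtain ⟨h1, h2⟩ := (hcmem _ S).mp hS
    exact le_of_eq (huniv S h1 h2)
  · -- E2'
    intro A B
    by_cases hA : g A = 0
    · calc min (g A) (g B) ≤ g A := min_le_left _ _
        _ = 0 := hA
        _ ≤ g (A ∩ B) := Fin.zero_le _
    by_cases hB : g B = 0
    · calc min (g A) (g B) ≤ g B := min_le_right _ _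
        _ = 0 := hB
        _ ≤ g (A ∩ B) := Fin.zero_le _
    obtain ⟨S, hS, hvS⟩ := hg_ne A hA
    obtain ⟨T, hT, hvT⟩ := hg_ne B hB
    obtain ⟨hS1, hS2⟩ := (hcmem _ S).mp hS
    obtain ⟨hT1, hT2⟩ := (hcmem _ T).mp hT
    have hmem : S ∪ T ∈ cand (A ∩ B) := by
      rw [hcmem]
      refine ⟨hS1.mono Finset.subset_union_left, ?_⟩
      rw [finset_biInter_union, hrestr_inter, hS2, hT2]
    have h1 : val (S ∪ T) = min (val S) (val T) := by
      rw [hval]; simp only [Finset.inf_union]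
    calc min (g A) (g B) = val (S ∪ T) := by rw [hvS, hvT, h1]
      _ ≤ g (A ∩ B) := Finset.le_sup hmem
  · -- g ∅ = 0
    rw [← Fin.le_zero_iff]
    apply Finset.sup_le
    intro S hS
    obtain ⟨h1, h2⟩ := (hcmem _ S).mp hS
    exact le_of_eq (hempty S h1 h2)
  · -- E3b'
    intro A hA
    have hA0 : g A ≠ 0 := by rw [hA]; decide
    obtain ⟨S, hS, hvS⟩ := hg_ne A hA0
    obtain ⟨hS1, hS2⟩ := (hcmem _ S).mp hS
    have hall : ∀ b ∈ S, f (τ b) = 2 := by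
      intro b hb
      have h1 : (2 : Fin 3) ≤ f (τ b) := by
        rw [← hA, hvS]; exact Finset.inf_le hb
      have h2 : f (τ b) ≤ 2 := by
        have := Fin.le_last (f (τ b)); exact this
      exact le_antisymm h2 h1
    have hmem : x ∈ ⋂ b ∈ S, τ b :=
      Set.mem_iInter₂.mpr (fun b hb => hE3b _ (hall b hb))
    have hmem2 : (⟨x, hxY⟩ : Y) ∈ restr Y (⋂ b ∈ S, τ b) := hmem
    rwa [hS2] at hmem2
  · -- ψ satisfaction
    intro l hl
    simpa only [elgLitSat, hgτ] using hsat l hl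
  · -- x membership
    exact fun a => ⟨fun h => h.1, fun h => ⟨h, hxY⟩⟩
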